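/- Let G be a finite p-group and φ an automorphism of G with G = [G, φ]. Let φ_{p'} be the p'-part of φ (a generator of the Hall p'-subgroup of ⟨φ⟩). Then [G, φ_{p'}] = G. -/

import Mathlib

/-!
Let `N = [G, ψ]`. As `ψ` commutes with `φ`, `N` is `φ`-invariant and `φ` induces an automorphism
`φ'` of `G ⧸ N` with `[G ⧸ N, φ'] = G ⧸ N`. By Bézout `φ ^ p ^ v ∈ ⟨ψ⟩`, and `ψ` acts trivially
on `G ⧸ N`, so `φ'` has `p`-power order. But a `p`-automorphism `α` of a nontrivial `p`-group `Q`
has `[Q, α] < Q`: it fixes some `b ≠ 1` of the nontrivial abelianization `A` of `Q`, so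
`a ↦ a⁻¹ α a` is a non-injective, hence non-surjective, endomorphism of `A` with image `[A, α]`.
-/

/-- The subgroup `[G, φ] = ⟨g⁻¹ g^φ : g ∈ G⟩` for an automorphism `φ` of `G`. -/
def commAut {G : Type} [Group G] (φ : MulAut G) : Subgroup G :=
  Subgroup.closure {x : G | ∃ g : G, x = g⁻¹ * φ g}

section CommAut

variable {G H : Type} [Group G] [Group H]

lemma inv_mul_apply_mem_commAut (ψ : MulAut G) (g : G) : g⁻¹ * ψ g ∈ commAut ψ :=
  Subgroup.subset_closure ⟨g, rfl⟩

lemma inv_mul_pow_apply_mem_commAut (ψ : MulAut G) (j : ℕ) (g : G) :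
    g⁻¹ * (ψ ^ j) g ∈ commAut ψ := by
  induction j generalizing g with
  | zero => simp [(commAut ψ).one_mem]
  | succ n ih =>
    have h : g⁻¹ * (ψ ^ (n + 1)) g = (g⁻¹ * ψ g) * ((ψ g)⁻¹ * (ψ ^ n) (ψ g)) := by
      rw [pow_succ, MulAut.mul_apply]; group
    rw [h]
    exact (commAut ψ).mul_mem (inv_mul_apply_mem_commAut ψ g) (ih (ψ g))

lemma map_pow_apply_of_map_apply {f : G →* H} {α : MulAut G} {β : MulAut H}
    (h : ∀ g, f (α g) = β (f g)) (n : ℕ) (g : G) : f ((α ^ n) g) = (β ^ n) (f g) := by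
  induction n generalizing g with
  | zero => rfl
  | succ n ih => rw [pow_succ, pow_succ, MulAut.mul_apply, MulAut.mul_apply, ih, h]

lemma map_commAut_of_surjective {f : G →* H} (hf : Function.Surjective f) {α : MulAut G}
    {β : MulAut H} (h : ∀ g, f (α g) = β (f g)) : (commAut α).map f = commAut β := by
  rw [commAut, commAut, MonoidHom.map_closure]
  congr 1
  ext x
  constructor
  · rintro ⟨_, ⟨g, rfl⟩, rfl⟩
    exact ⟨f g, by rw [map_mul, map_inv, h]⟩
  · rintro ⟨y, rfl⟩
    obtain ⟨g, rfl⟩ := hf y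
    exact ⟨g⁻¹ * α g, ⟨g, rfl⟩, by rw [map_mul, map_inv, h]⟩

lemma commAut_normal (ψ : MulAut G) : (commAut ψ).Normal where
  conj_mem n hn g := by
    suffices commAut ψ ≤ (commAut ψ).comap (MulAut.conj g).toMonoidHom from this hn
    refine (Subgroup.closure_le _).mpr ?_
    rintro _ ⟨a, rfl⟩
    have h : g * (a⁻¹ * ψ a) * g⁻¹ = (a * g⁻¹)⁻¹ * ψ (a * g⁻¹) * ((g⁻¹)⁻¹ * ψ g⁻¹)⁻¹ := by
      simp only [map_mul, map_inv]; group
    change g * (a⁻¹ * ψ a) * g⁻¹ ∈ commAut ψ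
    rw [h]
    exact (commAut ψ).mul_mem (inv_mul_apply_mem_commAut ψ _)
      ((commAut ψ).inv_mem (inv_mul_apply_mem_commAut ψ _))

end CommAut

lemma pow_mem_zpowers_of_orderOf_eq_div {M : Type*} [Group M] {φ ψ : M} (hφ : IsOfFinOrder φ)
    (hψ : ψ ∈ Subgroup.zpowers φ) {m : ℕ} (hm : m ∣ orderOf φ)
    (hψm : orderOf ψ = orderOf φ / m) : φ ^ m ∈ Subgroup.zpowers ψ := by
  obtain ⟨k, rfl⟩ : ∃ k : ℕ, φ ^ k = ψ := hφ.mem_powers_iff_mem_zpowers.mpr hψ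
  have hn : orderOf φ ≠ 0 := hφ.orderOf_pos.ne'
  have hgcd : (orderOf φ).gcd k = m := by
    rw [hφ.orderOf_pow] at hψm
    rw [← Nat.div_div_self (Nat.gcd_dvd_left _ k) hn, hψm, Nat.div_div_self hm hn]
  refine ⟨Nat.gcdB (orderOf φ) k, ?_⟩
  -- Bézout: `m = gcd n k = n * a + k * b` with `n = orderOf φ`, and `φ ^ n = 1`.
  rw [← zpow_natCast φ m, ← hgcd, Nat.gcd_eq_gcd_ab, zpow_add, zpow_mul, zpow_natCast,
    pow_orderOf_eq_one, one_zpow, one_mul, zpow_mul, zpow_natCast]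

lemma commAut_ne_top_of_apply_eq_self {A : Type} [CommGroup A] [Finite A] (α : MulAut A)
    {b : A} (hb : b ≠ 1) (hαb : α b = b) : commAut α ≠ ⊤ := by
  let f : A →* A := α.toMonoidHom / MonoidHom.id A
  have hf : ∀ a, f a = a⁻¹ * α a := fun a => div_eq_inv_mul _ _
  have hrange : commAut α = f.range := by
    rw [commAut, ← Subgroup.closure_eq f.range, MonoidHom.coe_range]
    congr 1
    ext x
    exact exists_congr fun a => by rw [hf, eq_comm]
  intro htop
  have hsurj : Function.Surjective f := MonoidHom.range_eq_top.mp (hrange ▸ htop)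
  refine hb (Finite.injective_iff_surjective.mpr hsurj ?_)
  rw [hf, hαb, inv_mul_cancel, map_one]

namespace IsPGroup

variable {p : ℕ} [Fact p.Prime] {Q : Type} [Group Q] [Finite Q] [Nontrivial Q]

lemma exists_ne_one_apply_eq_self (hQ : IsPGroup p Q) {α : MulAut Q} {k : ℕ}
    (hα : α ^ p ^ k = 1) : ∃ b ≠ 1, α b = b := by
  have hpα : IsPGroup p (Subgroup.zpowers α) :=
    of_card_dvd_pow (by rw [Nat.card_zpowers]; exact orderOf_dvd_of_pow_eq_one hα)
  have hp : p ∣ Nat.card Q := hQ.card_eq_or_dvd.resolve_left Finite.one_lt_card.ne'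
  obtain ⟨b, hb, hb1⟩ :=
    hpα.exists_fixed_point_of_prime_dvd_card_of_fixed_point Q hp (a := 1) fun σ => map_one σ.1
  exact ⟨b, hb1.symm, hb ⟨α, Subgroup.mem_zpowers α⟩⟩

lemma nontrivial_abelianization (hQ : IsPGroup p Q) : Nontrivial (Abelianization Q) := by
  have := hQ.isNilpotent
  rw [← not_subsingleton_iff_nontrivial, Abelianization, QuotientGroup.subsingleton_iff]
  exact (Group.IsSolvable.commutator_lt_top_of_nontrivial Q).ne

theorem commAut_ne_top (hQ : IsPGroup p Q) {α : MulAut Q} {k : ℕ} (hα : α ^ p ^ k = 1) :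
    commAut α ≠ ⊤ := by
  have := hQ.nontrivial_abelianization
  have hof : Function.Surjective (Abelianization.of : Q →* Abelianization Q) :=
    QuotientGroup.mk'_surjective _
  let β := α.abelianizationCongr
  have hαβ : ∀ g, Abelianization.of (α g) = β (Abelianization.of g) := fun _ => rfl
  have hβ : β ^ p ^ k = 1 := by
    ext x
    obtain ⟨g, rfl⟩ := hof x
    rw [← map_pow_apply_of_map_apply hαβ, hα, MulAut.one_apply, MulAut.one_apply]
  obtain ⟨b, hb, hβb⟩ := (hQ.of_surjective _ hof).exists_ne_one_apply_eq_self hβ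
  intro htop
  refine commAut_ne_top_of_apply_eq_self β hb hβb ?_
  rw [← map_commAut_of_surjective hof hαβ, htop, Subgroup.map_top_of_surjective _ hof]

end IsPGroup

theorem stmt17 (p : ℕ) (hp : p.Prime) (G : Type) [Group G] [Finite G]
    (hG : IsPGroup p G) (φ : MulAut G) (h : commAut φ = ⊤)
    (ψ : MulAut G) (hψ1 : ψ ∈ Subgroup.zpowers φ)
    (hψ2 : orderOf ψ = orderOf φ / p ^ (orderOf φ).factorization p) :
    commAut ψ = ⊤ := by
  have : Fact p.Prime := ⟨hp⟩
  set N := commAut ψ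
  have := commAut_normal ψ
  have hφψ : ∀ g, φ (ψ g) = ψ (φ g) := by
    obtain ⟨z, rfl⟩ := hψ1
    exact fun g => DFunLike.congr_fun ((Commute.refl φ).zpow_right z).eq g
  let φ' := QuotientGroup.congr N N φ (map_commAut_of_surjective φ.surjective hφψ)
  have hmk : ∀ g, QuotientGroup.mk' N (φ g) = φ' (QuotientGroup.mk' N g) := fun _ => rfl
  have htop : commAut φ' = ⊤ := by
    rw [← map_commAut_of_surjective (QuotientGroup.mk'_surjective N) hmk, h,
      Subgroup.map_top_of_surjective _ (QuotientGroup.mk'_surjective N)]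
  obtain ⟨j, hj⟩ : ∃ j : ℕ, ψ ^ j = φ ^ p ^ (orderOf φ).factorization p :=
    (isOfFinOrder_of_finite ψ).mem_powers_iff_mem_zpowers.mpr <|
      pow_mem_zpowers_of_orderOf_eq_div (isOfFinOrder_of_finite φ) hψ1 (Nat.ordProj_dvd _ _) hψ2
  have hpow : φ' ^ p ^ (orderOf φ).factorization p = 1 := by
    ext x
    obtain ⟨g, rfl⟩ := QuotientGroup.mk'_surjective N x
    rw [← map_pow_apply_of_map_apply hmk, ← hj, MulAut.one_apply]
    exact (QuotientGroup.eq.mpr (inv_mul_pow_apply_mem_commAut ψ j g)).symm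
  by_contra hN
  have : Nontrivial (G ⧸ N) := by
    rwa [← not_subsingleton_iff_nontrivial, QuotientGroup.subsingleton_iff]
  exact (hG.to_quotient N).commAut_ne_top hpow htop
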